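/- arXiv:2110.10224 — 4 statements merged into one kernel-verified Lean document; each statement's English description precedes it below -/
import Mathlib

section
/- Let p : V(K_{5,5}) → ℂ^3 be a regular point of the measurement map m_{3,K_{5,5}}, i.e., a configuration at which the rigidity matrix R_{K_{5,5}}(p) has rank 24 (the maximal possible rank). Then the space of equilibrium stresses of the framework (K_{5,5}, p), i.e., the left kernel of R_{K_{5,5}}(p), has dimension exactly 1, and every equilibrium stress ω of (K_{5,5}, p) is balanced, meaning the sum of the coordinates of ω over all 25 edges equals 0. -/
open scoped BigOperators

noncomputable section

/-- Complex squared length (no conjugation). -/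
def csq (d : ℕ) (x y : Fin d → ℂ) : ℂ := ∑ k, (x k - y k) ^ 2

lemma csq_comm (d : ℕ) (x y : Fin d → ℂ) : csq d x y = csq d y x := by
  unfold csq; congr 1; funext k; ring

/-- Squared length of an (unordered) edge under a configuration. -/
def edgeSq {V : Type*} (d : ℕ) (p : V → Fin d → ℂ) : Sym2 V → ℂ :=
  Sym2.lift ⟨fun u v => csq d (p u) (p v), fun u v => csq_comm d (p u) (p v)⟩

/-- The measurement map of a graph: a configuration goes to its vector of
squared edge lengths. -/
def measMap {V : Type*} (G : SimpleGraph V) (d : ℕ) (p : V → Fin d → ℂ) :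
    G.edgeSet → ℂ := fun e => edgeSq d p (e : Sym2 V)

/-- The `d`-dimensional measurement variety of a graph: the Zariski closure
(zero locus of the vanishing ideal) of the image of the measurement map. -/
def measVariety {V : Type*} (G : SimpleGraph V) (d : ℕ) : Set (G.edgeSet → ℂ) :=
  MvPolynomial.zeroLocus ℂ (MvPolynomial.vanishingIdeal ℂ (Set.range (measMap G d)))

/-- Row of the rigidity matrix for the ordered pair (u,v). -/
def rRowFun {V : Type*} [DecidableEq V] (p : V → Fin 3 → ℂ) (u v : V) :
    V → Fin 3 → ℂ :=
  fun w k => if w = u then 2 * (p u k - p v k)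
    else if w = v then 2 * (p v k - p u k) else 0

lemma rRowFun_comm {V : Type*} [DecidableEq V] (p : V → Fin 3 → ℂ) (u v : V) :
    rRowFun p u v = rRowFun p v u := by
  funext w k
  unfold rRowFun
  rcases eq_or_ne w u with h1 | h1 <;> rcases eq_or_ne w v with h2 | h2
  · have huv : u = v := h1.symm.trans h2
    subst huv; simp [h1]
  · have huv : u ≠ v := fun h => h2 (h1.trans h)
    simp [h1, h2, huv, huv.symm]
  · have huv : v ≠ u := fun h => h1 (h2.trans h)
    simp [h1, h2, huv, huv.symm]
  · simp [h1, h2]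

/-- Row of the rigidity matrix corresponding to an unordered edge. -/
def rigidityRow {V : Type*} [DecidableEq V] (p : V → Fin 3 → ℂ) :
    Sym2 V → (V → Fin 3 → ℂ) :=
  Sym2.lift ⟨rRowFun p, rRowFun_comm p⟩

/-- A fintype instance for edge sets over finite vertex types. -/
noncomputable instance edgeSetFintype {V : Type*} [Finite V] (G : SimpleGraph V) :
    Fintype G.edgeSet := Fintype.ofFinite _

noncomputable instance neighborSetFintype' {V : Type*} [Finite V] (G : SimpleGraph V) (v : V) :
    Fintype (G.neighborSet v) := Fintype.ofFinite _

/-- The space of equilibrium stresses of the framework `(G, p)`: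
the left kernel of the rigidity matrix. -/
def stressSpace {V : Type*} [DecidableEq V] [Finite V] (G : SimpleGraph V)
    (p : V → Fin 3 → ℂ) : Submodule ℂ (G.edgeSet → ℂ) where
  carrier := {ω | ∑ e : G.edgeSet, ω e • rigidityRow p (e : Sym2 V) = 0}
  add_mem' := by
    intro a b ha hb
    simp only [Set.mem_setOf_eq] at *
    simp only [Pi.add_apply, add_smul, Finset.sum_add_distrib, ha, hb, add_zero]
  zero_mem' := by simp
  smul_mem' := by
    intro c a ha
    simp only [Set.mem_setOf_eq] at *
    simp only [Pi.smul_apply, smul_eq_mul, mul_smul, ← Finset.smul_sum, ha, smul_zero]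

/-- The span of the rows of the rigidity matrix of `(G,p)`. -/
def rowSpan {V : Type*} [DecidableEq V] (G : SimpleGraph V) (p : V → Fin 3 → ℂ) :
    Submodule ℂ (V → Fin 3 → ℂ) :=
  Submodule.span ℂ (Set.range fun e : G.edgeSet => rigidityRow p (e : Sym2 V))

/-- The rank of the rigidity matrix of `(G,p)`. -/
def rigidityRank {V : Type*} [DecidableEq V] (G : SimpleGraph V) (p : V → Fin 3 → ℂ) : ℕ :=
  Module.finrank ℂ (rowSpan G p)

/-- `G` is a circuit of the 3-dimensional rigidity matroid: its full edge set is
dependent (for every configuration), but every proper subset of its edge set is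
independent (for some configuration). -/
def IsRigidityCircuit {V : Type*} [DecidableEq V] (G : SimpleGraph V) : Prop :=
  (∀ p : V → Fin 3 → ℂ, ¬ LinearIndependent ℂ (fun e : G.edgeSet => rigidityRow p (e : Sym2 V))) ∧
  (∀ S : Set (Sym2 V), S ⊆ G.edgeSet → S ≠ G.edgeSet →
    ∃ p : V → Fin 3 → ℂ, LinearIndependent ℂ (fun e : S => rigidityRow p (e : Sym2 V)))

/-- `G` is generically rigid in 3 dimensions. -/
def IsThreeRigid {V : Type*} [DecidableEq V] [Fintype V] (G : SimpleGraph V) : Prop :=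
  ∃ p : V → Fin 3 → ℂ, rigidityRank G p = 3 * Fintype.card V - 6

/-- The complete bipartite graph `K_{5,5}`. -/
def K55 : SimpleGraph (Fin 5 ⊕ Fin 5) := completeBipartiteGraph (Fin 5) (Fin 5)

/-- A vector is balanced if its coordinates sum to zero. -/
def IsBalanced {E : Type*} [Fintype E] (ω : E → ℂ) : Prop := ∑ e, ω e = 0

/-- The Zariski tangent space to a subset `W ⊆ ℂ^E` at a point `x`:
vectors annihilated by the differentials at `x` of all polynomials in the
vanishing ideal of `W`. -/
def zTangent {E : Type*} [Fintype E] (W : Set (E → ℂ)) (x : E → ℂ) :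
    Submodule ℂ (E → ℂ) where
  carrier := {v | ∀ f ∈ MvPolynomial.vanishingIdeal ℂ W,
    ∑ e, v e * MvPolynomial.eval x (MvPolynomial.pderiv e f) = 0}
  add_mem' := by
    intro a b ha hb
    simp only [Set.mem_setOf_eq] at *
    intro f hf
    simp only [Pi.add_apply, add_mul, Finset.sum_add_distrib, ha f hf, hb f hf, add_zero]
  zero_mem' := by simp
  smul_mem' := by
    intro c a ha
    simp only [Set.mem_setOf_eq] at *
    intro f hf
    simp only [Pi.smul_apply, smul_eq_mul, mul_assoc, ← Finset.mul_sum, ha f hf, mul_zero]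

/-- Krull dimension of (the Zariski closure of) a subset of `ℂ^E`, as the Krull
dimension of its coordinate ring. -/
def varietyDim {E : Type*} (W : Set (E → ℂ)) : WithBot (WithTop ℕ) :=
  ringKrullDim (MvPolynomial E ℂ ⧸ MvPolynomial.vanishingIdeal ℂ W)

/-- `x` is a smooth point of `W` if it lies on `W` and its Zariski tangent space
has dimension equal to the Krull dimension of `W`. -/
def IsSmoothPoint {E : Type*} [Fintype E] (W : Set (E → ℂ)) (x : E → ℂ) : Prop :=
  x ∈ W ∧ (Module.finrank ℂ (zTangent W x) : WithBot (WithTop ℕ)) = varietyDim W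

/-- `ω` is a normal vector to `W` at `x`. -/
def IsNormalAt {E : Type*} [Fintype E] (W : Set (E → ℂ)) (x : E → ℂ) (ω : E → ℂ) : Prop :=
  ∀ v ∈ zTangent W x, ∑ e, ω e * v e = 0

/-- The set `S(G)` of smooth points of a measurement variety. -/
def smoothLocus {E : Type*} [Fintype E] (W : Set (E → ℂ)) : Set (E → ℂ) :=
  {x | IsSmoothPoint W x}

/-- The set `B(G)` of smooth points all of whose normal vectors are balanced. -/
def balancedLocus {E : Type*} [Fintype E] (W : Set (E → ℂ)) : Set (E → ℂ) :=
  {x | IsSmoothPoint W x ∧ ∀ ω : E → ℂ, IsNormalAt W x ω → IsBalanced ω}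

open Finset Module

/-!
By rank–nullity, rank 24 on 25 edges leaves a one-dimensional stress space, so it suffices to
exhibit one nonzero balanced stress. Five points in `ℂ³` are affinely dependent, so each side
carries nonzero weights `λ`, `μ` with `∑ λ_a = 0`, `∑ λ_a p_a = 0` and likewise for `μ`.
The product `ω(a, b) = λ_a μ_b` is then a stress (Bolker–Roth): at a vertex `a` the equilibrium
condition reads `2 λ_a ∑_b μ_b (p_a - p_b) = 0`. Its coordinate sum is `(∑ λ)(∑ μ) = 0`.
-/

theorem Fintype.exists_nontrivial_relation_sum_zero_of_finrank_succ_lt_card {K P ι : Type*}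
    [Field K] [AddCommGroup P] [Module K P] [FiniteDimensional K P] [Fintype ι] (q : ι → P)
    (h : finrank K P + 1 < Fintype.card ι) :
    ∃ w : ι → K, ∑ i, w i • q i = 0 ∧ ∑ i, w i = 0 ∧ w ≠ 0 := by
  have hdep : ¬ AffineIndependent K q := fun hq =>
    h.not_ge (hq.card_le_finrank_succ.trans (by grw [Submodule.finrank_le]))
  simp only [affineIndependent_iff_of_fintype, not_forall] at hdep
  obtain ⟨w, hw, hq, i, hi⟩ := hdep
  exact ⟨w, by rwa [weightedVSub_eq_linear_combination _ hw] at hq, hw, fun h0 => hi (by simp [h0])⟩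

theorem finrank_stressSpace_add_rigidityRank {V : Type*} [DecidableEq V] [Finite V]
    (G : SimpleGraph V) (p : V → Fin 3 → ℂ) :
    finrank ℂ (stressSpace G p) + rigidityRank G p = Fintype.card G.edgeSet := by
  let T := Fintype.linearCombination ℂ fun e : G.edgeSet => rigidityRow p (e : Sym2 V)
  have hker : stressSpace G p = LinearMap.ker T := rfl
  have hrange : rowSpan G p = LinearMap.range T := (Fintype.range_linearCombination ℂ _).symm
  rw [rigidityRank, hker, hrange, add_comm, LinearMap.finrank_range_add_finrank_ker,
    finrank_fintype_fun_eq_card]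

theorem IsBalanced.smul {E : Type*} [Fintype E] {ω : E → ℂ} (hω : IsBalanced ω) (c : ℂ) :
    IsBalanced (c • ω) := by
  rw [IsBalanced] at hω ⊢
  simp only [Pi.smul_apply, smul_eq_mul, ← mul_sum, hω, mul_zero]

theorem sum_smul_sub_eq_zero {R ι M : Type*} [Ring R] [Fintype ι] [AddCommGroup M]
    [Module R M] {w : ι → R} {q : ι → M} (hw : ∑ i, w i = 0) (hq : ∑ i, w i • q i = 0) (x : M) :
    ∑ i, w i • (x - q i) = 0 := by
  simp only [smul_sub, sum_sub_distrib, ← sum_smul, hw, hq, zero_smul, sub_zero]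

section CompleteBipartite

variable {W₁ W₂ : Type*}

def completeBipartiteEdgeEquiv : W₁ × W₂ ≃ (completeBipartiteGraph W₁ W₂).edgeSet :=
  (Equiv.ofInjective (fun x : W₁ × W₂ => s(.inl x.1, .inr x.2)) (by
      rintro ⟨a, b⟩ ⟨a', b'⟩ h
      simpa using h)).trans
    (Equiv.setCongr SimpleGraph.edgeSet_completeBipartiteGraph.symm)

@[simp]
theorem coe_completeBipartiteEdgeEquiv (x : W₁ × W₂) :
    (completeBipartiteEdgeEquiv x : Sym2 (W₁ ⊕ W₂)) = s(.inl x.1, .inr x.2) := rfl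

theorem card_edgeSet_completeBipartiteGraph [Fintype W₁] [Fintype W₂] :
    Fintype.card (completeBipartiteGraph W₁ W₂).edgeSet = Fintype.card W₁ * Fintype.card W₂ := by
  rw [← Fintype.card_congr completeBipartiteEdgeEquiv, Fintype.card_prod]

def productStress (lam : W₁ → ℂ) (mu : W₂ → ℂ) : (completeBipartiteGraph W₁ W₂).edgeSet → ℂ :=
  fun e => Sym2.lift ⟨fun x y => Sum.elim lam mu x * Sum.elim lam mu y, fun _ _ => mul_comm _ _⟩ e

@[simp]
theorem productStress_completeBipartiteEdgeEquiv (lam : W₁ → ℂ) (mu : W₂ → ℂ) (x : W₁ × W₂) :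
    productStress lam mu (completeBipartiteEdgeEquiv x) = lam x.1 * mu x.2 := rfl

theorem productStress_ne_zero {lam : W₁ → ℂ} {mu : W₂ → ℂ} (hlam : lam ≠ 0) (hmu : mu ≠ 0) :
    productStress lam mu ≠ 0 := by
  obtain ⟨a, ha⟩ := Function.ne_iff.mp hlam
  obtain ⟨b, hb⟩ := Function.ne_iff.mp hmu
  intro h
  exact mul_ne_zero ha hb (by simpa using congrFun h (completeBipartiteEdgeEquiv (a, b)))

theorem isBalanced_productStress [Fintype W₁] [Fintype W₂] {lam : W₁ → ℂ}
    (hlam : ∑ a, lam a = 0) (mu : W₂ → ℂ) : IsBalanced (productStress lam mu) := by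
  rw [IsBalanced, ← completeBipartiteEdgeEquiv.sum_comp, Fintype.sum_prod_type]
  simp only [productStress_completeBipartiteEdgeEquiv, ← sum_mul_sum, hlam, zero_mul]

variable [DecidableEq W₁] [DecidableEq W₂] (p : W₁ ⊕ W₂ → Fin 3 → ℂ)

theorem rigidityRow_inl_inr_apply_inl (a a' : W₁) (b : W₂) :
    rigidityRow p s(.inl a, .inr b) (.inl a') =
      if a = a' then (2 : ℂ) • (p (.inl a) - p (.inr b)) else 0 := by
  funext k
  by_cases h : a = a' <;> simp [rigidityRow, rRowFun, h, eq_comm]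

theorem rigidityRow_inl_inr_apply_inr (a : W₁) (b b' : W₂) :
    rigidityRow p s(.inl a, .inr b) (.inr b') =
      if b = b' then (2 : ℂ) • (p (.inr b) - p (.inl a)) else 0 := by
  funext k
  by_cases h : b = b' <;> simp [rigidityRow, rRowFun, h, eq_comm]

theorem productStress_mem_stressSpace [Fintype W₁] [Fintype W₂] {lam : W₁ → ℂ} {mu : W₂ → ℂ}
    (hlam : ∑ a, lam a = 0) (hlam' : ∑ a, lam a • p (.inl a) = 0)
    (hmu : ∑ b, mu b = 0) (hmu' : ∑ b, mu b • p (.inr b) = 0) :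
    productStress lam mu ∈ stressSpace (completeBipartiteGraph W₁ W₂) p := by
  change ∑ e, productStress lam mu e • rigidityRow p (e : Sym2 _) = 0
  rw [← completeBipartiteEdgeEquiv.sum_comp, Fintype.sum_prod_type]
  funext v
  rcases v with a' | b'
  · simp only [productStress_completeBipartiteEdgeEquiv, coe_completeBipartiteEdgeEquiv,
      Finset.sum_apply, Pi.smul_apply, rigidityRow_inl_inr_apply_inl, smul_ite, smul_zero,
      sum_ite_irrel, sum_const_zero, sum_ite_eq', mem_univ, if_true, Pi.zero_apply]
    calc ∑ b, (lam a' * mu b) • (2 : ℂ) • (p (.inl a') - p (.inr b))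
        = (2 * lam a') • ∑ b, mu b • (p (.inl a') - p (.inr b)) := by
          rw [smul_sum]
          exact sum_congr rfl fun b _ => by module
      _ = 0 := by rw [sum_smul_sub_eq_zero hmu hmu', smul_zero]
  · simp only [productStress_completeBipartiteEdgeEquiv, coe_completeBipartiteEdgeEquiv,
      Finset.sum_apply, Pi.smul_apply, rigidityRow_inl_inr_apply_inr, smul_ite, smul_zero,
      sum_ite_eq', mem_univ, if_true, Pi.zero_apply]
    calc ∑ a, (lam a * mu b') • (2 : ℂ) • (p (.inr b') - p (.inl a))
        = (2 * mu b') • ∑ a, lam a • (p (.inr b') - p (.inl a)) := by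
          rw [smul_sum]
          exact sum_congr rfl fun a _ => by module
      _ = 0 := by rw [sum_smul_sub_eq_zero hlam hlam', smul_zero]

end CompleteBipartite

/-- At a regular point of the measurement map of `K_{5,5}` (rank of the
rigidity matrix equal to 24), the space of equilibrium stresses is
one-dimensional and every equilibrium stress is balanced. -/
theorem K55_unique_balanced_stress (p : (Fin 5 ⊕ Fin 5) → Fin 3 → ℂ)
    (hreg : rigidityRank K55 p = 24) :
    Module.finrank ℂ (stressSpace K55 p) = 1 ∧
      ∀ ω ∈ stressSpace K55 p, IsBalanced ω := by
  have hdim : finrank ℂ (stressSpace K55 p) = 1 := by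
    have hcard : Fintype.card K55.edgeSet = 25 :=
      card_edgeSet_completeBipartiteGraph.trans (by simp)
    have := finrank_stressSpace_add_rigidityRank K55 p
    omega
  refine ⟨hdim, fun ω hω => ?_⟩
  obtain ⟨lam, hlam', hlam, hlam0⟩ :=
    Fintype.exists_nontrivial_relation_sum_zero_of_finrank_succ_lt_card (K := ℂ)
      (fun a : Fin 5 => p (.inl a)) (by simp)
  obtain ⟨mu, hmu', hmu, hmu0⟩ :=
    Fintype.exists_nontrivial_relation_sum_zero_of_finrank_succ_lt_card (K := ℂ)
      (fun b : Fin 5 => p (.inr b)) (by simp)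
  have hmem := productStress_mem_stressSpace p hlam hlam' hmu hmu'
  obtain ⟨c, hc⟩ := (finrank_eq_one_iff_of_nonzero' (⟨_, hmem⟩ : stressSpace K55 p)
    fun h => productStress_ne_zero hlam0 hmu0 (congrArg Subtype.val h)).mp hdim ⟨ω, hω⟩
  have hω₀ : c • productStress lam mu = ω := congrArg Subtype.val hc
  exact hω₀ ▸ (isBalanced_productStress hlam mu).smul c

end
end

section
/- Let φ be a permutation of the edge set of K_{5,5} such that whenever two edges e and f of K_{5,5} share a vertex, the edges φ(e) and φ(f) also share a vertex. Then φ is induced by a graph automorphism of K_{5,5}: there exists an automorphism τ of K_{5,5} with φ({u,v}) = {τ(u),τ(v)} for every edge {u,v}. -/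
open scoped BigOperators

noncomputable section

/-!
Identify the edges of `K_{α,β}` with the cells of the grid `α × β`: two edges share a vertex
iff their cells lie in a common row or column. Pairwise collinear cells lie on one line, so
the edge permutation maps every row and every column into a line. An injective map cannot
send a row and a column both into rows, since by finiteness the image of the row already
fills its target row; likewise for columns. Hence either rows go to rows and columns to
columns, and the permutation is a product `f × g` of bijections of the two sides, or the
two kinds of lines are exchanged and it is such a product followed by transposition.
Both kinds of maps are induced by automorphisms of `K_{α,β}`.
-/

open Function

/-- Lying in a common row or column; for edges of `completeBipartiteGraph α β` this is
sharing a vertex (`exists_mem_edgeEquiv_iff`). -/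
def Prod.SameLine {α β : Type*} (p q : α × β) : Prop := p.1 = q.1 ∨ p.2 = q.2

section Rook

variable {α β γ δ ι : Type*}

lemma forall_fst_eq_or_forall_snd_eq_of_pairwise_sameLine {f : ι → α × β}
    (h : ∀ x y, (f x).SameLine (f y)) :
    (∀ x y, (f x).1 = (f y).1) ∨ ∀ x y, (f x).2 = (f y).2 := by
  refine or_iff_not_imp_left.2 fun hfst => ?_
  obtain ⟨x₀, y₀, hne⟩ : ∃ x₀ y₀, (f x₀).1 ≠ (f y₀).1 := by simpa using hfst
  have hsnd (x : ι) : (f x).2 = (f x₀).2 := by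
    by_cases hx : (f x).1 = (f x₀).1
    · exact ((h x y₀).resolve_left (by rwa [hx])).trans ((h x₀ y₀).resolve_left hne).symm
    · exact (h x x₀).resolve_left hx
  exact fun x y => (hsnd x).trans (hsnd y).symm

lemma Function.Injective.not_fst_eq_on_row_and_col [Finite β] [Nontrivial α]
    {ψ : α × β → γ × β} (hψ : Injective ψ) (i : α) (j : β)
    (hrow : ∀ j₁ j₂, (ψ (i, j₁)).1 = (ψ (i, j₂)).1) :
    ¬ ∀ i₁ i₂, (ψ (i₁, j)).1 = (ψ (i₂, j)).1 := by
  intro hcol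
  obtain ⟨i', hi'⟩ := exists_ne i
  have hrow_inj : Injective fun j' => (ψ (i, j')).2 := fun j₁ j₂ h =>
    (Prod.mk.inj (hψ (Prod.ext (hrow j₁ j₂) h))).2
  -- Row `i` already fills the whole line of `γ × β` that column `j` is mapped into.
  obtain ⟨j', hj'⟩ := Finite.injective_iff_surjective.1 hrow_inj (ψ (i', j)).2
  exact hi' (congrArg Prod.fst (hψ (Prod.ext ((hrow j' j).trans (hcol i i')) hj'))).symm

lemma Function.Injective.not_snd_eq_on_row_and_col [Finite α] [Nontrivial β]
    {ψ : α × β → α × δ} (hψ : Injective ψ) (i : α) (j : β)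
    (hrow : ∀ j₁ j₂, (ψ (i, j₁)).2 = (ψ (i, j₂)).2) :
    ¬ ∀ i₁ i₂, (ψ (i₁, j)).2 = (ψ (i₂, j)).2 := fun hcol =>
  (Prod.swap_injective.comp (hψ.comp Prod.swap_injective)).not_fst_eq_on_row_and_col
    (ψ := Prod.swap ∘ ψ ∘ Prod.swap) j i hcol hrow

variable [Finite α] [Finite β] [Nontrivial α] [Nontrivial β]

lemma Function.Injective.apply_eq_or_apply_eq_swap_of_sameLine {ψ : α × β → α × β}
    (hψ : Injective ψ) (hline : ∀ p q, p.SameLine q → (ψ p).SameLine (ψ q)) (i₀ : α) (j₀ : β) :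
    (∀ i j, ψ (i, j) = ((ψ (i, j₀)).1, (ψ (i₀, j)).2)) ∨
      ∀ i j, ψ (i, j) = ((ψ (i₀, j)).1, (ψ (i, j₀)).2) := by
  have hrow (i : α) := forall_fst_eq_or_forall_snd_eq_of_pairwise_sameLine
    (f := fun j => ψ (i, j)) fun _ _ => hline _ _ (Or.inl rfl)
  have hcol (j : β) := forall_fst_eq_or_forall_snd_eq_of_pairwise_sameLine
    (f := fun i => ψ (i, j)) fun _ _ => hline _ _ (Or.inr rfl)
  rcases hrow i₀ with hrow₀ | hrow₀
  · have hc (j : β) := (hcol j).resolve_left (hψ.not_fst_eq_on_row_and_col i₀ j hrow₀)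
    have hr (i : α) := (hrow i).resolve_right fun h => hψ.not_snd_eq_on_row_and_col i j₀ h (hc j₀)
    exact .inl fun i j => Prod.ext (hr i j j₀) (hc j i i₀)
  · have hc (j : β) := (hcol j).resolve_right (hψ.not_snd_eq_on_row_and_col i₀ j hrow₀)
    have hr (i : α) := (hrow i).resolve_left fun h => hψ.not_fst_eq_on_row_and_col i j₀ h (hc j₀)
    exact .inr fun i j => Prod.ext (hc j i i₀) (hr i j j₀)

lemma Equiv.Perm.exists_prodMap_or_exists_swap_prodMap_of_sameLine (ψ : Equiv.Perm (α × β))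
    (hline : ∀ p q, p.SameLine q → (ψ p).SameLine (ψ q)) :
    (∃ (f : α ≃ α) (g : β ≃ β), ∀ p, ψ p = Prod.map f g p) ∨
      ∃ (f : α ≃ β) (g : β ≃ α), ∀ p, ψ p = (Prod.map f g p).swap := by
  obtain ⟨i₀⟩ : Nonempty α := inferInstance
  obtain ⟨j₀⟩ : Nonempty β := inferInstance
  rcases ψ.injective.apply_eq_or_apply_eq_swap_of_sameLine hline i₀ j₀ with h | h
  · have hmap : ⇑ψ = Prod.map (fun i => (ψ (i, j₀)).1) (fun j => (ψ (i₀, j)).2) :=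
      funext fun p => h p.1 p.2
    obtain ⟨hf, hg⟩ := Prod.map_bijective.1 (hmap ▸ ψ.bijective)
    exact .inl ⟨.ofBijective _ hf, .ofBijective _ hg, fun p => congrFun hmap p⟩
  · have hmap : Prod.swap ∘ ⇑ψ = Prod.map (fun i => (ψ (i, j₀)).2) (fun j => (ψ (i₀, j)).1) :=
      funext fun p => congrArg Prod.swap (h p.1 p.2)
    obtain ⟨hf, hg⟩ := Prod.map_bijective.1 (hmap ▸ Prod.swap_bijective.comp ψ.bijective)
    exact .inr ⟨.ofBijective _ hf, .ofBijective _ hg, fun p => (congrFun hmap p ▸ rfl)⟩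

end Rook

namespace SimpleGraph

variable {α β γ δ : Type*}

def completeBipartiteGraphComm : completeBipartiteGraph α β ≃g completeBipartiteGraph β α where
  __ := Equiv.sumComm α β
  map_rel_iff' := by simp [or_comm]

def completeBipartiteGraph.edgeEquiv : α × β ≃ (completeBipartiteGraph α β).edgeSet :=
  (Equiv.ofInjective (fun p : α × β => s(Sum.inl p.1, Sum.inr p.2)) fun p q h => by
      simpa [Prod.ext_iff] using h).trans
    (Equiv.setCongr edgeSet_completeBipartiteGraph.symm)

namespace completeBipartiteGraph

@[simp]
lemma coe_edgeEquiv (p : α × β) : (edgeEquiv p : Sym2 (α ⊕ β)) = s(.inl p.1, .inr p.2) := rfl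

lemma exists_mem_edgeEquiv_iff (p q : α × β) :
    (∃ v, v ∈ (edgeEquiv p : Sym2 (α ⊕ β)) ∧ v ∈ (edgeEquiv q : Sym2 (α ⊕ β))) ↔ p.SameLine q := by
  simp [Prod.SameLine]

lemma map_congr_edgeEquiv (f : α ≃ γ) (g : β ≃ δ) (p : α × β) :
    Sym2.map (completeBipartiteGraphCongr f g) (edgeEquiv p) =
      (edgeEquiv (Prod.map f g p) : Sym2 (γ ⊕ δ)) := rfl

lemma map_comm_edgeEquiv (p : α × β) :
    Sym2.map completeBipartiteGraphComm (edgeEquiv p) = (edgeEquiv p.swap : Sym2 (β ⊕ α)) := by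
  simp [completeBipartiteGraphComm, Sym2.eq_swap]

theorem exists_iso_of_edgePerm [Finite α] [Finite β] [Nontrivial α] [Nontrivial β]
    (φ : (completeBipartiteGraph α β).edgeSet ≃ (completeBipartiteGraph α β).edgeSet)
    (hφ : ∀ e f : (completeBipartiteGraph α β).edgeSet,
      (∃ v, v ∈ (e : Sym2 (α ⊕ β)) ∧ v ∈ (f : Sym2 (α ⊕ β))) →
      ∃ v, v ∈ (φ e : Sym2 (α ⊕ β)) ∧ v ∈ (φ f : Sym2 (α ⊕ β))) :
    ∃ τ : completeBipartiteGraph α β ≃g completeBipartiteGraph α β,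
      ∀ e, (φ e : Sym2 (α ⊕ β)) = Sym2.map τ e := by
  set ψ : Equiv.Perm (α × β) := (edgeEquiv.trans φ).trans edgeEquiv.symm
  have hψ (p : α × β) : φ (edgeEquiv p) = edgeEquiv (ψ p) := by simp [ψ]
  have hline (p q : α × β) (hpq : p.SameLine q) : (ψ p).SameLine (ψ q) := by
    rw [← exists_mem_edgeEquiv_iff, ← hψ, ← hψ]
    exact hφ _ _ ((exists_mem_edgeEquiv_iff p q).2 hpq)
  rcases ψ.exists_prodMap_or_exists_swap_prodMap_of_sameLine hline with ⟨f, g, h⟩ | ⟨f, g, h⟩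
  · refine ⟨completeBipartiteGraphCongr f g, fun e => ?_⟩
    obtain ⟨p, rfl⟩ := edgeEquiv.surjective e
    rw [map_congr_edgeEquiv, hψ, h]
  · refine ⟨(completeBipartiteGraphCongr f g).trans completeBipartiteGraphComm, fun e => ?_⟩
    obtain ⟨p, rfl⟩ := edgeEquiv.surjective e
    calc (φ (edgeEquiv p) : Sym2 (α ⊕ β)) = edgeEquiv (Prod.map f g p).swap := by rw [hψ, h]
      _ = Sym2.map completeBipartiteGraphComm
            (Sym2.map (completeBipartiteGraphCongr f g) (edgeEquiv p)) := by
        rw [map_congr_edgeEquiv, map_comm_edgeEquiv]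
      _ = _ := Sym2.map_map _

end completeBipartiteGraph

end SimpleGraph

/-- A permutation of the edges of `K_{5,5}` that preserves the relation of
sharing a vertex is induced by a graph automorphism of `K_{5,5}`. -/
theorem edge_permutation_preserving_incidence_is_induced
    (φ : K55.edgeSet ≃ K55.edgeSet)
    (hφ : ∀ e f : K55.edgeSet,
      (∃ v, v ∈ (e : Sym2 (Fin 5 ⊕ Fin 5)) ∧ v ∈ (f : Sym2 (Fin 5 ⊕ Fin 5))) →
      ∃ v, v ∈ ((φ e : Sym2 (Fin 5 ⊕ Fin 5))) ∧ v ∈ ((φ f : Sym2 (Fin 5 ⊕ Fin 5)))) :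
    ∃ τ : K55 ≃g K55, ∀ e : K55.edgeSet,
      ((φ e : Sym2 (Fin 5 ⊕ Fin 5))) = Sym2.map ⇑τ (e : Sym2 (Fin 5 ⊕ Fin 5)) :=
  SimpleGraph.completeBipartiteGraph.exists_iso_of_edgePerm φ hφ

end
end

section
/- If G is a circuit of the 3-dimensional rigidity matroid with exactly 10 vertices and 25 edges, then G is 3-rigid: there exists a configuration p : V(G) → ℂ^3 for which the rigidity matrix R_G(p) has rank 3·10 − 6 = 24. -/
open scoped BigOperators

noncomputable section

/-! Since 3 · 10 - 6 = 25 - 1, rigidity means that the circuit has rank one less than its number of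
edges. The rows of all edges are dependent for every configuration, so the rank is at most 24, and
some configuration makes the rows of all edges but one independent, so it is at least 24. -/

section RigidityRank

variable {V : Type*} [DecidableEq V] [Finite V] {G : SimpleGraph V} {p : V → Fin 3 → ℂ}

theorem rigidityRank_lt_card_edgeSet
    (hp : ¬ LinearIndependent ℂ (fun e : G.edgeSet => rigidityRow p (e : Sym2 V))) :
    rigidityRank G p < Fintype.card G.edgeSet :=
  lt_of_le_of_ne (finrank_range_le_card _)
    fun h => hp (linearIndependent_iff_card_eq_finrank_span.mpr h.symm)

theorem card_le_rigidityRank {S : Finset (Sym2 V)} (hS : (S : Set (Sym2 V)) ⊆ G.edgeSet)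
    (hp : LinearIndependent ℂ (fun e : (S : Set (Sym2 V)) => rigidityRow p (e : Sym2 V))) :
    S.card ≤ rigidityRank G p := by
  have hspan : Submodule.span ℂ (Set.range fun e : (S : Set (Sym2 V)) => rigidityRow p e)
      ≤ rowSpan G p :=
    Submodule.span_mono <| by
      rintro _ ⟨e, rfl⟩
      exact ⟨⟨e, hS e.2⟩, rfl⟩
  calc S.card = Fintype.card (S : Set (Sym2 V)) := (Fintype.card_coe S).symm
    _ = _ := (finrank_span_eq_card hp).symm
    _ ≤ rigidityRank G p := Submodule.finrank_mono hspan

end RigidityRank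

theorem IsRigidityCircuit.edgeSet_nonempty {V : Type*} [DecidableEq V] {G : SimpleGraph V}
    (hC : IsRigidityCircuit G) : G.edgeSet.Nonempty := by
  by_contra h
  have : IsEmpty G.edgeSet := Set.isEmpty_coe_sort.mpr (Set.not_nonempty_iff_eq_empty.mp h)
  exact hC.1 0 linearIndependent_empty_type

theorem IsRigidityCircuit.exists_rigidityRank_add_one_eq {V : Type*} [DecidableEq V] [Finite V]
    {G : SimpleGraph V} (hC : IsRigidityCircuit G) :
    ∃ p : V → Fin 3 → ℂ, rigidityRank G p + 1 = Fintype.card G.edgeSet := by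
  obtain ⟨e₀, he₀⟩ := hC.edgeSet_nonempty
  have he₀' : e₀ ∈ G.edgeFinset := SimpleGraph.mem_edgeFinset.mpr he₀
  set S := G.edgeFinset.erase e₀
  have hS : (S : Set (Sym2 V)) ⊆ G.edgeSet := fun e he =>
    SimpleGraph.mem_edgeFinset.mp (Finset.mem_of_mem_erase he)
  have hS_ne : (S : Set (Sym2 V)) ≠ G.edgeSet := fun h =>
    Finset.notMem_erase e₀ G.edgeFinset (h ▸ he₀ : e₀ ∈ (S : Set (Sym2 V)))
  obtain ⟨p, hp⟩ := hC.2 S hS hS_ne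
  have hlower := card_le_rigidityRank hS hp
  have hupper := rigidityRank_lt_card_edgeSet (hC.1 p)
  rw [Finset.card_erase_of_mem he₀', SimpleGraph.edgeFinset_card] at hlower
  exact ⟨p, by omega⟩

theorem circuit_10_25_is_threeRigid_general {V : Type} [DecidableEq V] [Fintype V]
    (G : SimpleGraph V) (hC : IsRigidityCircuit G)
    (h25 : G.edgeFinset.card = 25) :
    ∃ p : V → Fin 3 → ℂ, rigidityRank G p = 24 := by
  obtain ⟨p, hp⟩ := hC.exists_rigidityRank_add_one_eq
  rw [SimpleGraph.edgeFinset_card] at h25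
  exact ⟨p, by omega⟩

/-- A circuit of the 3-dimensional rigidity matroid with 10 vertices and 25
edges is 3-rigid: some configuration gives the rigidity matrix rank 24. -/
theorem circuit_10_25_is_threeRigid {V : Type} [DecidableEq V] [Fintype V]
    (G : SimpleGraph V) (hC : IsRigidityCircuit G)
    (h10 : Fintype.card V = 10) (h25 : G.edgeFinset.card = 25) :
    ∃ p : V → Fin 3 → ℂ, rigidityRank G p = 24 :=
  circuit_10_25_is_threeRigid_general G hC h25

end
end

section
/- K_{5,5} is a circuit of the 3-dimensional rigidity matroid: for every configuration p : V(K_{5,5}) → ℂ^3 the 25 rows of the rigidity matrix R_{K_{5,5}}(p) are linearly dependent, and for every proper subset S of the edge set of K_{5,5} there exists a configuration p for which the rows of R_{K_{5,5}}(p) indexed by S are linearly independent. -/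
open scoped BigOperators

noncomputable section

/-!
If `a` and `b` are affine dependencies of the two colour classes of a framework of `K_{α,β}` in
`ℂ³`, then `ωᵢⱼ = aᵢ bⱼ` is an equilibrium stress; since five points of `ℂ³` are always affinely
dependent, every framework of `K_{5,5}` has a nonzero stress. For one explicit integer
configuration the rows of all edges but one are independent (an integer dual certificate shows
this) and the stress `a ⊗ b` has no zero entry, so every stress is a multiple of it and the rows
of any proper subset of the edges are independent.
-/

open Module Matrix

def IsAffineDependency {ι K M : Type*} [Fintype ι] [Semiring K] [AddCommMonoid M] [Module K M]
    (a : ι → K) (P : ι → M) : Prop :=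
  ∑ i, a i = 0 ∧ ∑ i, a i • P i = 0

section LinearAlgebra

variable {ι K M : Type*} [Field K] [AddCommGroup M] [Module K M]

theorem exists_isAffineDependency [Fintype ι] [FiniteDimensional K M] (P : ι → M)
    (h : finrank K M + 1 < Fintype.card ι) : ∃ a : ι → K, a ≠ 0 ∧ IsAffineDependency a P := by
  have hP : ¬ AffineIndependent K P := fun hP =>
    h.not_ge (hP.card_le_finrank_succ.trans (Nat.succ_le_succ (Submodule.finrank_le _)))
  rw [affineIndependent_iff_of_fintype] at hP
  push Not at hP
  obtain ⟨a, ha, hwv, i, hi⟩ := hP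
  refine ⟨a, fun h0 => hi (congrFun h0 i), ha, ?_⟩
  rwa [Finset.weightedVSub_eq_linear_combination _ ha] at hwv

theorem linearIndepOn_compl_singleton_of_dependency [Fintype ι] {v : ι → M} {w : ι → K}
    (hw : ∀ i, w i ≠ 0) (hdep : ∑ i, w i • v i = 0) {i₀ : ι} (h₀ : LinearIndepOn K v {i₀}ᶜ)
    (j : ι) : LinearIndepOn K v {j}ᶜ := by
  rw [linearIndepOn_iff] at h₀ ⊢
  intro l hl hlv
  set w' := (Finsupp.linearEquivFunOnFinite K K ι).symm w
  have hw' : Finsupp.linearCombination K v w' = 0 := by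
    rw [Finsupp.linearCombination_eq_fintype_linearCombination_apply,
      Fintype.linearCombination_apply, hdep]
  set c := l i₀ / w i₀
  have hl' : l = c • w' := by
    refine sub_eq_zero.mp (h₀ _ ?_ (by rw [map_sub, map_smul, hlv, hw', smul_zero, sub_zero]))
    rw [Finsupp.mem_supported']
    intro x hx
    rw [Set.notMem_compl_iff, Set.mem_singleton_iff] at hx
    subst hx
    simp [w', c, div_mul_cancel₀ _ (hw _)]
  have hc : c = 0 := by
    have hlj : l j = 0 := (Finsupp.mem_supported' _ _).mp hl j (by simp)
    rw [hl'] at hlj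
    simpa [w', hw j] using hlj
  rw [hl', hc, zero_smul]

theorem linearIndepOn_of_dual_eq_zero_iff {v : ι → M} {s : Set ι} (φ : ι → Dual K M)
    (h : ∀ i ∈ s, ∀ j ∈ s, φ i (v j) = 0 ↔ i ≠ j) : LinearIndepOn K v s :=
  .of_pairwise_dual_eq_zero_one _ (fun i : s => (φ i (v i))⁻¹ • φ i)
    (fun i j hij => by simp [(h i i.2 j j.2).mpr (Subtype.coe_ne_coe.mpr hij)])
    (fun i => inv_mul_cancel₀ fun h0 => (h i i.2 i i.2).mp h0 rfl)

end LinearAlgebra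

def dotWith {V n K : Type*} [Fintype V] [Fintype n] [CommSemiring K] (y : V → n → K) :
    Dual K (V → n → K) where
  toFun x := ∑ v, x v ⬝ᵥ y v
  map_add' x x' := by simp only [Pi.add_apply, add_dotProduct, Finset.sum_add_distrib]
  map_smul' c x := by
    simp only [Pi.smul_apply, smul_dotProduct, Finset.smul_sum, RingHom.id_apply]

theorem dotWith_rRowFun {V : Type*} [Fintype V] [DecidableEq V] (y p : V → Fin 3 → ℂ) {u v : V}
    (huv : u ≠ v) : dotWith y (rRowFun p u v) = 2 * ((p u - p v) ⬝ᵥ (y u - y v)) := by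
  change ∑ w, rRowFun p u v w ⬝ᵥ y w = _
  rw [Fintype.sum_eq_add u v huv fun w hw => by simp [rRowFun, hw.1, hw.2, dotProduct]]
  simp only [dotProduct, rRowFun, ↓reduceIte, Fin.sum_univ_three, huv.symm, Pi.sub_apply]
  ring

section Bipartite

variable {α β : Type*}

def bipartiteEdge (x : α × β) : Sym2 (α ⊕ β) := s(.inl x.1, .inr x.2)

theorem bipartiteEdge_injective : Function.Injective (bipartiteEdge : α × β → Sym2 (α ⊕ β)) := by
  rintro ⟨a, b⟩ ⟨a', b'⟩ h
  simpa [bipartiteEdge] using h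

theorem edgeSet_completeBipartiteGraph_eq_range :
    (completeBipartiteGraph α β).edgeSet = Set.range bipartiteEdge :=
  SimpleGraph.edgeSet_completeBipartiteGraph

variable [DecidableEq α] [DecidableEq β]

theorem rigidityRow_bipartiteEdge (p : α ⊕ β → Fin 3 → ℂ) (x : α × β) :
    rigidityRow p (bipartiteEdge x) = rRowFun p (.inl x.1) (.inr x.2) := rfl

variable [Fintype α] [Fintype β]

theorem sum_mul_smul_rRowFun_eq_zero (p : α ⊕ β → Fin 3 → ℂ) {a : α → ℂ} {b : β → ℂ}
    (ha : IsAffineDependency a fun i => p (.inl i))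
    (hb : IsAffineDependency b fun j => p (.inr j)) :
    ∑ x : α × β, (a x.1 * b x.2) • rRowFun p (.inl x.1) (.inr x.2) = 0 := by
  ext (i₀ | j₀) k <;>
    simp only [Finset.sum_apply, Pi.smul_apply, rRowFun, Sum.inl.injEq, Sum.inr.injEq,
      reduceCtorEq, ↓reduceIte, smul_eq_mul, mul_ite, mul_zero, Fintype.sum_prod_type,
      Finset.sum_ite_irrel, Finset.sum_const_zero, Finset.sum_ite_eq, Finset.mem_univ,
      Pi.zero_apply]
  · have hk : ∑ j, b j * p (.inr j) k = 0 := by simpa using congrFun hb.2 k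
    calc _ = 2 * a i₀ * p (.inl i₀) k * ∑ j, b j - 2 * a i₀ * ∑ j, b j * p (.inr j) k := by
          simp only [Finset.mul_sum, ← Finset.sum_sub_distrib]
          exact Finset.sum_congr rfl fun j _ => by ring
      _ = 0 := by rw [hb.1, hk]; ring
  · have hk : ∑ i, a i * p (.inl i) k = 0 := by simpa using congrFun ha.2 k
    calc _ = 2 * b j₀ * p (.inr j₀) k * ∑ i, a i - 2 * b j₀ * ∑ i, a i * p (.inl i) k := by
          simp only [Finset.mul_sum, ← Finset.sum_sub_distrib]
          exact Finset.sum_congr rfl fun i _ => by ring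
      _ = 0 := by rw [ha.1, hk]; ring

theorem not_linearIndependent_rigidityRow_completeBipartiteGraph (hα : 5 ≤ Fintype.card α)
    (hβ : 5 ≤ Fintype.card β) (p : α ⊕ β → Fin 3 → ℂ) :
    ¬ LinearIndependent ℂ fun e : (completeBipartiteGraph α β).edgeSet => rigidityRow p e := by
  intro h
  have hdim : finrank ℂ (Fin 3 → ℂ) + 1 < 5 := by simp
  obtain ⟨a, ha0, ha⟩ := exists_isAffineDependency (fun i => p (.inl i)) (hdim.trans_le hα)
  obtain ⟨b, hb0, hb⟩ := exists_isAffineDependency (fun j => p (.inr j)) (hdim.trans_le hβ)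
  have hrows : LinearIndependent ℂ fun x : α × β => rigidityRow p (bipartiteEdge x) :=
    h.comp (fun x => ⟨bipartiteEdge x, edgeSet_completeBipartiteGraph_eq_range ▸ ⟨x, rfl⟩⟩)
      fun x y hxy => bipartiteEdge_injective (congrArg Subtype.val hxy)
  obtain ⟨i, hi⟩ := Function.ne_iff.mp ha0
  obtain ⟨j, hj⟩ := Function.ne_iff.mp hb0
  exact mul_ne_zero hi hj <| Fintype.linearIndependent_iff.mp hrows _
    (sum_mul_smul_rRowFun_eq_zero p ha hb) (i, j)

end Bipartite

namespace K55

def configuration : Fin 5 ⊕ Fin 5 → Fin 3 → ℤ :=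
  Sum.elim ![![0, -1, 0], ![-1, 1, -1], ![-1, 0, 0], ![0, 1, 1], ![-1, 1, 0]]
    ![![0, 0, 1], ![0, 0, -1], ![1, 0, 1], ![0, 1, 0], ![1, -1, 1]]

def point (v : Fin 5 ⊕ Fin 5) : Fin 3 → ℂ := fun k => configuration v k

def leftDependency : Fin 5 → ℂ := ![1, -1, -2, -1, 3]

def rightDependency : Fin 5 → ℂ := ![-1, -1, -2, 2, 2]

theorem isAffineDependency_left : IsAffineDependency leftDependency fun i => point (.inl i) := by
  refine ⟨?_, funext fun k => ?_⟩
  · simp only [leftDependency, Fin.sum_univ_five, Matrix.cons_val, Fin.isValue]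
    norm_num
  · fin_cases k <;>
      simp only [leftDependency, point, configuration, Fin.sum_univ_five, Matrix.cons_val,
        Fin.isValue, Finset.sum_apply, Pi.smul_apply, Sum.elim_inl, smul_eq_mul,
        Pi.zero_apply] <;>
      norm_num

theorem isAffineDependency_right : IsAffineDependency rightDependency fun j => point (.inr j) := by
  refine ⟨?_, funext fun k => ?_⟩
  · simp only [rightDependency, Fin.sum_univ_five, Matrix.cons_val, Fin.isValue]
    norm_num
  · fin_cases k <;>
      simp only [rightDependency, point, configuration, Fin.sum_univ_five, Matrix.cons_val,
        Fin.isValue, Finset.sum_apply, Pi.smul_apply, Sum.elim_inr, smul_eq_mul,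
        Pi.zero_apply] <;>
      norm_num

-- Columns of the inverse of a nonsingular 24 × 24 minor of the rigidity matrix of `K_{5,5}`
def certificate : Fin 5 → Fin 5 → Fin 5 ⊕ Fin 5 → Fin 3 → ℤ :=
  ![![Sum.elim ![![0, 0, 0], ![0, 0, 0], ![0, 0, 0], ![0, 0, 0], ![0, 0, 0]]
      ![![0, 0, 0], ![0, 0, 0], ![0, 0, 0], ![0, 0, 0], ![0, 0, 0]],
      Sum.elim ![![-1, 0, 1], ![0, 0, 0], ![0, 0, 0], ![0, 0, 0], ![0, 0, 0]]
      ![![0, 0, 0], ![0, 0, 0], ![0, 0, 0], ![0, 0, 0], ![0, 0, 0]],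
      Sum.elim ![![-4, 0, 4], ![1, 5, 4], ![-2, 2, 6], ![2, 1, 5], ![0, 3, 6]]
      ![![3, 1, 1], ![-3, 1, 5], ![0, -1, 2], ![0, 0, 5], ![0, 0, 0]],
      Sum.elim ![![5, -1, -5], ![-1, -5, -4], ![2, -2, -6], ![-2, -1, -5], ![0, -3, -6]]
      ![![-3, -1, -1], ![3, -1, -5], ![0, 1, -2], ![0, 0, -5], ![0, 0, 0]],
      Sum.elim ![![3, 0, -4], ![-1, -5, -4], ![2, -2, -6], ![-2, -1, -5], ![0, -3, -6]]
      ![![-3, -1, -1], ![3, -1, -5], ![0, 1, -2], ![0, 0, -5], ![0, 0, 0]]],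
    ![Sum.elim ![![0, 0, 0], ![0, 0, 0], ![0, 0, 0], ![0, 0, 0], ![0, 0, 0]]
      ![![-1, 0, 1], ![0, 0, 0], ![0, 0, 0], ![0, 0, 0], ![0, 0, 0]],
      Sum.elim ![![0, 0, 0], ![-1, 0, 1], ![0, 0, 0], ![0, 0, 0], ![0, 0, 0]]
      ![![-1, 0, 1], ![0, 0, 0], ![0, 0, 0], ![0, 0, 0], ![0, 0, 0]],
      Sum.elim ![![1, 0, -1], ![-2, -1, 1], ![0, 0, 0], ![0, 0, -1], ![0, 0, 0]]
      ![![-1, 0, 1], ![-1, 0, -1], ![0, 0, 0], ![0, 0, -1], ![0, 0, 0]],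
      Sum.elim ![![-1, 0, 1], ![1, 0, -1], ![0, 0, 0], ![0, 0, 1], ![0, 0, 0]]
      ![![1, 0, -1], ![1, 0, 1], ![0, 0, 0], ![0, 0, 1], ![0, 0, 0]],
      Sum.elim ![![-1, 0, 1], ![3, 2, -2], ![0, 0, 0], ![0, 0, 1], ![0, 0, 0]]
      ![![3, 0, -3], ![1, 0, 1], ![0, 0, 0], ![0, 0, 1], ![0, 0, 0]]],
    ![Sum.elim ![![-1, 0, 1], ![-1, 6, 7], ![-2, 2, 6], ![4, 2, 6], ![0, 4, 8]]
      ![![3, 2, 3], ![-3, 4, 5], ![0, -2, 2], ![0, 0, 6], ![0, 0, 0]],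
      Sum.elim ![![3, 0, -3], ![-1, 0, 1], ![0, 0, 0], ![0, 0, 0], ![0, 0, 0]]
      ![![-1, 0, 1], ![1, 2, -1], ![0, 0, 0], ![0, 0, 0], ![0, 0, 0]],
      Sum.elim ![![7, 0, -7], ![-1, -6, -5], ![3, -3, -9], ![-4, -2, -6], ![0, -4, -8]]
      ![![-5, -2, -1], ![5, 0, -7], ![0, 2, -2], ![0, 0, -6], ![0, 0, 0]],
      Sum.elim ![![-5, 0, 5], ![1, 3, 2], ![-2, 1, 5], ![2, 1, 3], ![0, 2, 4]]
      ![![3, 1, 0], ![-3, -1, 4], ![0, -1, 1], ![0, 0, 3], ![0, 0, 0]],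
      Sum.elim ![![-5, 0, 5], ![1, 3, 2], ![-2, 2, 5], ![2, 1, 3], ![0, 2, 4]]
      ![![3, 1, 0], ![-3, -1, 4], ![0, -1, 1], ![0, 0, 3], ![0, 0, 0]]],
    ![Sum.elim ![![-1, 0, 1], ![-1, 6, 7], ![-2, 2, 6], ![4, 2, 6], ![0, 4, 8]]
      ![![1, 0, 3], ![-3, 4, 5], ![0, -2, 2], ![0, 0, 6], ![0, 0, 0]],
      Sum.elim ![![1, 0, -1], ![-1, 0, 1], ![0, 0, 0], ![0, 0, 0], ![0, 0, 0]]
      ![![-1, 0, 1], ![-1, 0, -1], ![0, 0, 0], ![0, 0, 0], ![0, 0, 0]],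
      Sum.elim ![![0, 0, 0], ![-1, 3, 4], ![-1, 1, 3], ![0, 0, 3], ![0, 2, 4]]
      ![![0, 0, 2], ![-2, 2, 2], ![0, -1, 1], ![0, 0, 3], ![0, 0, 0]],
      Sum.elim ![![-1, 0, 1], ![1, 0, -1], ![0, 0, 0], ![0, 0, 1], ![0, 0, 0]]
      ![![1, 0, -1], ![1, 0, 1], ![0, 0, 0], ![0, 0, 0], ![0, 0, 0]],
      Sum.elim ![![0, 0, 0], ![1, -3, -4], ![1, -1, -3], ![-1, 0, -3], ![0, -2, -4]]
      ![![0, 0, -2], ![2, -2, -2], ![0, 1, -1], ![0, 0, -3], ![0, 0, 0]]],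
    ![Sum.elim ![![1, 0, -1], ![1, -6, -7], ![2, -2, -6], ![-4, -2, -6], ![0, -4, -8]]
      ![![1, -2, -5], ![3, -4, -5], ![0, 2, -2], ![0, 0, -6], ![0, 0, 0]],
      Sum.elim ![![-3, 0, 3], ![3, 0, -3], ![0, 0, 0], ![0, 0, 0], ![0, 0, 0]]
      ![![3, 0, -3], ![1, -2, 1], ![0, 0, 0], ![0, 0, 0], ![0, 0, 0]],
      Sum.elim ![![-5, 0, 5], ![4, 3, -1], ![-1, 1, 3], ![2, 1, 3], ![0, 1, 2]]
      ![![4, 1, -2], ![0, -1, 4], ![0, -1, 1], ![0, 0, 3], ![0, 0, 0]],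
      Sum.elim ![![5, 0, -5], ![-4, -3, 1], ![1, -1, -3], ![-2, -1, -3], ![-1, -2, -2]]
      ![![-4, -1, 2], ![0, 1, -4], ![0, 1, -1], ![0, 0, -3], ![0, 0, 0]],
      Sum.elim ![![3, 0, -3], ![-3, 0, 3], ![0, 0, 0], ![0, 0, 0], ![0, 1, 1]]
      ![![-3, 0, 3], ![-1, 2, -1], ![0, 0, 0], ![0, 0, 0], ![0, 0, 0]]]]

theorem dotProduct_certificate_eq_zero_iff : ∀ s t : Fin 5 × Fin 5, s ≠ (0, 0) → t ≠ (0, 0) →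
    ((configuration (.inl s.1) - configuration (.inr s.2)) ⬝ᵥ
      (certificate t.1 t.2 (.inl s.1) - certificate t.1 t.2 (.inr s.2)) = 0 ↔ t ≠ s) := by
  decide +kernel

theorem linearIndepOn_rows_compl_singleton (j : Fin 5 × Fin 5) :
    LinearIndepOn ℂ (fun x => rigidityRow point (bipartiteEdge x)) {j}ᶜ := by
  have hw : ∀ x : Fin 5 × Fin 5, leftDependency x.1 * rightDependency x.2 ≠ 0 := by
    rintro ⟨i₁, i₂⟩
    refine mul_ne_zero ?_ ?_
    · fin_cases i₁ <;> norm_num [leftDependency]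
    · fin_cases i₂ <;> norm_num [rightDependency]
  have h₀ : LinearIndepOn ℂ (fun x => rigidityRow point (bipartiteEdge x)) {(0, 0)}ᶜ := by
    refine linearIndepOn_of_dual_eq_zero_iff
      (fun t => dotWith fun v k => (certificate t.1 t.2 v k : ℂ)) fun t ht s hs => ?_
    rw [rigidityRow_bipartiteEdge, dotWith_rRowFun _ _ Sum.inl_ne_inr,
      ← dotProduct_certificate_eq_zero_iff s t hs ht]
    simp only [dotProduct, Pi.sub_apply, point, mul_eq_zero, two_ne_zero, false_or]
    exact_mod_cast Iff.rfl
  exact linearIndepOn_compl_singleton_of_dependency hw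
    (sum_mul_smul_rRowFun_eq_zero point isAffineDependency_left isAffineDependency_right) h₀ j

end K55

/-- `K_{5,5}` is a circuit of the 3-dimensional rigidity matroid: the rows of
its rigidity matrix are dependent for every configuration, while every proper
subset of its edge set is independent for some configuration. -/
theorem K55_isRigidityCircuit :
    (∀ p : (Fin 5 ⊕ Fin 5) → Fin 3 → ℂ,
      ¬ LinearIndependent ℂ (fun e : K55.edgeSet => rigidityRow p (e : Sym2 (Fin 5 ⊕ Fin 5)))) ∧
    (∀ S : Set (Sym2 (Fin 5 ⊕ Fin 5)), S ⊆ K55.edgeSet → S ≠ K55.edgeSet →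
      ∃ p : (Fin 5 ⊕ Fin 5) → Fin 3 → ℂ,
        LinearIndependent ℂ (fun e : S => rigidityRow p (e : Sym2 (Fin 5 ⊕ Fin 5)))) := by
  refine ⟨not_linearIndependent_rigidityRow_completeBipartiteGraph (by simp) (by simp),
    fun S hS hne => ⟨K55.point, ?_⟩⟩
  obtain ⟨e₀, he₀, he₀S⟩ := Set.exists_of_ssubset (hS.ssubset_of_ne hne)
  rw [K55, edgeSet_completeBipartiteGraph_eq_range] at hS he₀
  obtain ⟨j, rfl⟩ := he₀
  refine ((K55.linearIndepOn_rows_compl_singleton j).image_of_comp _ _).mono ?_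
  intro e he
  obtain ⟨x, rfl⟩ := hS he
  exact ⟨x, fun hx => he₀S (hx ▸ he), rfl⟩

end
end
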